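/- Let $(S,d)$ be a metric space with $d$ bounded by $\Delta$, let $q$ be a Markov kernel on $S$, and let $c$ be a Markovian coupling of $\{q(x,\cdot)\}$ such that $\int d(y,\tilde y)\,c((x,\tilde x), dy\,d\tilde y) \le \gamma\, d(x,\tilde x)$ for all $x,\tilde x$ in an open set $\mathcal{O} \subseteq S$, where $\gamma \in (0,1)$. Then for any probability measures $\mu,\nu$ on $S$ and any $n \in \mathbb{N}$, the $L^1$-Wasserstein distance satisfies $\mathcal{W}_d(\mu q^n, \nu q^n) \le \gamma^n \mathcal{W}_d(\mu,\nu) + \Delta\,(\mathbb{P}_\mu[\exists k < n: X_k \notin \mathcal{O}] + \mathbb{P}_\nu[\exists k < n: X_k \notin \mathcal{O}])$, where $(X_k,\mathbb{P}_\mu)$ and $(X_k,\mathbb{P}_\nu)$ are Markov chains with kernel $q$ started from $\mu$, $\nu$. -/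

import Mathlib

open MeasureTheory ProbabilityTheory ENNReal

/-- Couplings of two measures. -/
def couplings {S : Type*} [MeasurableSpace S] (μ ν : Measure S) : Set (Measure (S × S)) :=
  {η | η.map Prod.fst = μ ∧ η.map Prod.snd = ν}

/-- The `L¹`-Wasserstein (Kantorovich–Rubinstein) distance w.r.t. a cost `d`,
as an infimum over couplings. -/
noncomputable def wassersteinDist {S : Type*} [MeasurableSpace S] (d : S → S → ℝ)
    (μ ν : Measure S) : ℝ≥0∞ :=
  ⨅ η ∈ couplings μ ν, ∫⁻ p, ENNReal.ofReal (d p.1 p.2) ∂η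

/-- The distribution after `n` steps of the Markov chain with kernel `q` started in `μ`. -/
noncomputable def chainLaw {S : Type*} [MeasurableSpace S] (q : Kernel S S)
    (μ : Measure S) : ℕ → Measure S
  | 0 => μ
  | (n+1) => (chainLaw q μ n).bind (fun x => q x)

/-- The law of `X_n` restricted to the event that the chain stayed in `O`
at all times `k < n`. In particular `(stayLaw q O μ n) univ = P_μ[∀ k < n, X_k ∈ O]`. -/
noncomputable def stayLaw {S : Type*} [MeasurableSpace S] (q : Kernel S S) (O : Set S)
    (μ : Measure S) : ℕ → Measure S
  | 0 => μ
  | (n+1) => ((stayLaw q O μ n).restrict O).bind (fun x => q x)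

/-!
Fix a coupling `η` of `μ` and `ν` and run the coupled chain with kernel `c` from `η`, killed as
soon as one of its components leaves `𝒪`. Its surviving mass `ζ` is a sub-coupling of `μqⁿ` and
`νqⁿ` whose cost has shrunk by `γⁿ`, and by a union bound it lacks at most
`P_μ[∃ k < n, X_k ∉ 𝒪] + P_ν[∃ k < n, X_k ∉ 𝒪]` of mass. Coupling the missing mass independently
costs at most `Δ` per unit; then take the infimum over `η`.
-/

open Set

namespace MeasureTheory.Measure

variable {α β : Type*} [MeasurableSpace α] [MeasurableSpace β]

lemma comp_mono_right (κ : Kernel α β) {μ ν : Measure α} (h : μ ≤ ν) : κ ∘ₘ μ ≤ κ ∘ₘ ν := by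
  refine Measure.le_iff.2 fun s hs => ?_
  rw [bind_apply hs κ.aemeasurable, bind_apply hs κ.aemeasurable]
  exact lintegral_mono' h le_rfl

lemma map_apply_univ {f : α → β} (hf : Measurable f) (μ : Measure α) : μ.map f univ = μ univ := by
  rw [map_apply hf MeasurableSet.univ, preimage_univ]

lemma comp_map_eq_comp_comap (κ : Kernel β β) {f : α → β} (hf : Measurable f) (μ : Measure α) :
    κ ∘ₘ μ.map f = κ.comap f hf ∘ₘ μ := by
  rw [← deterministic_comp_eq_map hf, comp_assoc, Kernel.comp_deterministic_eq_comap]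

lemma restrict_add_restrict_le {a b z Z : Measure α} {A B : Set α} (hA : MeasurableSet A)
    (hB : MeasurableSet B) (hab : a + b ≤ z + Z) (ha : a ≤ Z) (hb : b ≤ Z) :
    a.restrict A + b.restrict B ≤ z.restrict (A ∩ B) + Z := by
  calc a.restrict A + b.restrict B
      = (a + b).restrict (A ∩ B) + (a.restrict (A \ B) + b.restrict (B \ A)) := by
        rw [← restrict_inter_add_sdiff A hB (μ := a), ← restrict_inter_add_sdiff B hA (μ := b),
          inter_comm B A, restrict_add]
        abel
    _ ≤ (z + Z).restrict (A ∩ B) + (Z.restrict (A \ B) + Z.restrict (B \ A)) := by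
        gcongr
    _ = z.restrict (A ∩ B) + ((Z.restrict (A ∩ B) + Z.restrict (A \ B)) + Z.restrict (B \ A)) := by
        rw [restrict_add]
        abel
    _ = z.restrict (A ∩ B) + Z.restrict (A ∪ B) := by
        rw [restrict_inter_add_sdiff A hB, ← restrict_union disjoint_sdiff_right (hB.diff hA),
          union_sdiff_self]
    _ ≤ z.restrict (A ∩ B) + Z := add_le_add_right restrict_le_self _

end MeasureTheory.Measure

section Couplings

variable {S : Type*} [MeasurableSpace S]

lemma add_mem_couplings {μ ν μ' ν' : Measure S} {η η' : Measure (S × S)}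
    (h : η ∈ couplings μ ν) (h' : η' ∈ couplings μ' ν') : η + η' ∈ couplings (μ + μ') (ν + ν') :=
  ⟨by rw [Measure.map_add _ _ measurable_fst, h.1, h'.1],
    by rw [Measure.map_add _ _ measurable_snd, h.2, h'.2]⟩

lemma smul_prod_mem_couplings {μ ν : Measure S} [IsFiniteMeasure μ] [IsFiniteMeasure ν]
    (h : μ univ = ν univ) : (μ univ)⁻¹ • μ.prod ν ∈ couplings μ ν := by
  by_cases h0 : μ univ = 0
  · have hμ : μ = 0 := Measure.measure_univ_eq_zero.1 h0
    have hν : ν = 0 := Measure.measure_univ_eq_zero.1 (h ▸ h0)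
    simp [couplings, hμ, hν]
  refine ⟨?_, ?_⟩
  · rw [Measure.map_smul, Measure.map_fst_prod, ← h, smul_smul,
      ENNReal.inv_mul_cancel h0 (measure_ne_top _ _), one_smul]
  · rw [Measure.map_smul, Measure.map_snd_prod, smul_smul,
      ENNReal.inv_mul_cancel h0 (measure_ne_top _ _), one_smul]

variable {d : S → S → ℝ} {Δ : ℝ}

lemma lintegral_le_of_mem_couplings (hd : ∀ x y, d x y ≤ Δ) {μ ν : Measure S}
    {η : Measure (S × S)} (hη : η ∈ couplings μ ν) :
    ∫⁻ p, ENNReal.ofReal (d p.1 p.2) ∂η ≤ ENNReal.ofReal Δ * μ univ := by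
  calc ∫⁻ p, ENNReal.ofReal (d p.1 p.2) ∂η ≤ ∫⁻ _, ENNReal.ofReal Δ ∂η :=
        lintegral_mono fun p => ENNReal.ofReal_le_ofReal (hd _ _)
    _ = ENNReal.ofReal Δ * μ univ := by
        rw [lintegral_const, ← hη.1, Measure.map_apply_univ measurable_fst]

/-- The missing mass of the sub-coupling `ζ` is coupled independently. -/
lemma wassersteinDist_le_lintegral_add (hd : ∀ x y, d x y ≤ Δ) {μ ν : Measure S}
    [IsFiniteMeasure μ] [IsFiniteMeasure ν] (hμν : μ univ = ν univ) {ζ : Measure (S × S)}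
    (hζ₁ : ζ.map Prod.fst ≤ μ) (hζ₂ : ζ.map Prod.snd ≤ ν) :
    wassersteinDist d μ ν ≤
      ∫⁻ p, ENNReal.ofReal (d p.1 p.2) ∂ζ + ENNReal.ofReal Δ * (μ univ - ζ univ) := by
  have : IsFiniteMeasure (ζ.map Prod.fst) := isFiniteMeasure_of_le μ hζ₁
  have : IsFiniteMeasure (ζ.map Prod.snd) := isFiniteMeasure_of_le ν hζ₂
  have hmass₁ : (μ - ζ.map Prod.fst) univ = μ univ - ζ univ := by
    rw [Measure.sub_apply MeasurableSet.univ hζ₁, Measure.map_apply_univ measurable_fst]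
  have hmass₂ : (ν - ζ.map Prod.snd) univ = μ univ - ζ univ := by
    rw [Measure.sub_apply MeasurableSet.univ hζ₂, Measure.map_apply_univ measurable_snd, hμν]
  have hρ := smul_prod_mem_couplings (hmass₁.trans hmass₂.symm)
  have hcoupling := add_mem_couplings (η := ζ) ⟨rfl, rfl⟩ hρ
  rw [add_comm (ζ.map _), Measure.sub_add_cancel_of_le hζ₁, add_comm (ζ.map _),
    Measure.sub_add_cancel_of_le hζ₂] at hcoupling
  calc wassersteinDist d μ ν ≤ ∫⁻ p, ENNReal.ofReal (d p.1 p.2) ∂(ζ + _) :=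
        iInf₂_le _ hcoupling
    _ ≤ _ := by
        rw [lintegral_add_measure, ← hmass₁]
        exact add_le_add le_rfl (lintegral_le_of_mem_couplings hd hρ)

lemma le_mul_wassersteinDist_add {μ ν : Measure S} (hne : (couplings μ ν).Nonempty)
    {a r C : ℝ≥0∞} (hr : r ≠ ∞)
    (h : ∀ η ∈ couplings μ ν, a ≤ r * ∫⁻ p, ENNReal.ofReal (d p.1 p.2) ∂η + C) :
    a ≤ r * wassersteinDist d μ ν + C := by
  have : Nonempty (couplings μ ν) := hne.to_subtype
  rw [wassersteinDist, iInf_subtype', ENNReal.mul_iInf fun h => absurd h hr, ENNReal.iInf_add]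
  exact le_iInf fun η => h η η.2

end Couplings

section Chains

variable {α β : Type*} [MeasurableSpace α] [MeasurableSpace β]

lemma chainLaw_succ (q : Kernel α α) (μ : Measure α) (n : ℕ) :
    chainLaw q μ (n + 1) = q ∘ₘ chainLaw q μ n := rfl

lemma stayLaw_succ (q : Kernel α α) (O : Set α) (μ : Measure α) (n : ℕ) :
    stayLaw q O μ (n + 1) = q ∘ₘ (stayLaw q O μ n).restrict O := rfl

instance isProbabilityMeasure_chainLaw (q : Kernel α α) [IsMarkovKernel q] (μ : Measure α)
    [IsProbabilityMeasure μ] (n : ℕ) : IsProbabilityMeasure (chainLaw q μ n) := by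
  induction n with
  | zero => assumption
  | succ n ih => rw [chainLaw_succ]; infer_instance

lemma stayLaw_univ (q : Kernel α α) (μ : Measure α) (n : ℕ) :
    stayLaw q univ μ n = chainLaw q μ n := by
  induction n with
  | zero => rfl
  | succ n ih => rw [stayLaw_succ, chainLaw_succ, Measure.restrict_univ, ih]

lemma stayLaw_mono_set (q : Kernel α α) {A B : Set α} (hAB : A ⊆ B) (μ : Measure α) (n : ℕ) :
    stayLaw q A μ n ≤ stayLaw q B μ n := by
  induction n with
  | zero => exact le_rfl
  | succ n ih => exact Measure.comp_mono_right q (Measure.restrict_mono hAB ih)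

lemma stayLaw_le_chainLaw (q : Kernel α α) (A : Set α) (μ : Measure α) (n : ℕ) :
    stayLaw q A μ n ≤ chainLaw q μ n :=
  stayLaw_univ q μ n ▸ stayLaw_mono_set q (subset_univ A) μ n

/-- At `univ` this is the union bound `P[leave A ∩ B] ≤ P[leave A] + P[leave B]`. -/
lemma stayLaw_add_le (q : Kernel α α) {A B : Set α} (hA : MeasurableSet A)
    (hB : MeasurableSet B) (μ : Measure α) (n : ℕ) :
    stayLaw q A μ n + stayLaw q B μ n ≤ stayLaw q (A ∩ B) μ n + chainLaw q μ n := by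
  induction n with
  | zero => exact le_rfl
  | succ n ih =>
    rw [stayLaw_succ, stayLaw_succ, stayLaw_succ, chainLaw_succ, ← Measure.comp_add,
      ← Measure.restrict_univ (μ := chainLaw q μ n), ← Measure.comp_add]
    refine Measure.comp_mono_right q ?_
    rw [Measure.restrict_univ]
    exact Measure.restrict_add_restrict_le hA hB ih (stayLaw_le_chainLaw q A μ n)
      (stayLaw_le_chainLaw q B μ n)

lemma map_stayLaw_preimage {c : Kernel α α} {q : Kernel β β} {f : α → β} (hf : Measurable f)
    (hcf : ∀ p, (c p).map f = q (f p)) {O : Set β} (hO : MeasurableSet O) (η : Measure α)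
    (n : ℕ) : (stayLaw c (f ⁻¹' O) η n).map f = stayLaw q O (η.map f) n := by
  induction n with
  | zero => rfl
  | succ n ih =>
    have hc : c.map f = q.comap f hf := by
      ext1 p
      rw [Kernel.map_apply c hf, Kernel.comap_apply, hcf]
    rw [stayLaw_succ, stayLaw_succ, ← ih, Measure.restrict_map hf hO,
      Measure.comp_map_eq_comp_comap q hf, Measure.map_comp _ _ hf, hc]

lemma map_chainLaw {c : Kernel α α} {q : Kernel β β} {f : α → β} (hf : Measurable f)
    (hcf : ∀ p, (c p).map f = q (f p)) (η : Measure α) (n : ℕ) :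
    (chainLaw c η n).map f = chainLaw q (η.map f) n := by
  simpa only [preimage_univ, stayLaw_univ] using map_stayLaw_preimage hf hcf MeasurableSet.univ η n

lemma lintegral_stayLaw_le {c : Kernel α α} {A : Set α} (hA : MeasurableSet A)
    {f : α → ℝ≥0∞} {r : ℝ≥0∞} (hr : r ≠ ∞) (hf : ∀ p ∈ A, ∫⁻ y, f y ∂(c p) ≤ r * f p)
    (η : Measure α) (n : ℕ) : ∫⁻ p, f p ∂(stayLaw c A η n) ≤ r ^ n * ∫⁻ p, f p ∂η := by
  induction n with
  | zero => rw [pow_zero, one_mul]; rfl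
  | succ n ih =>
    calc ∫⁻ p, f p ∂(stayLaw c A η (n + 1))
        ≤ ∫⁻ p, ∫⁻ y, f y ∂(c p) ∂((stayLaw c A η n).restrict A) :=
          Measure.lintegral_bind_le _ _ _
      _ ≤ ∫⁻ p, r * f p ∂((stayLaw c A η n).restrict A) :=
          lintegral_mono_ae (ae_restrict_of_forall_mem hA hf)
      _ = r * ∫⁻ p, f p ∂((stayLaw c A η n).restrict A) := lintegral_const_mul' _ _ hr
      _ ≤ r * (r ^ n * ∫⁻ p, f p ∂η) := by
          gcongr
          exact (lintegral_mono' Measure.restrict_le_self le_rfl).trans ih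
      _ = r ^ (n + 1) * ∫⁻ p, f p ∂η := by ring

lemma one_sub_stayLaw_prod_le {q : Kernel α α} [IsMarkovKernel q] {c : Kernel (α × α) (α × α)}
    (hc1 : ∀ p : α × α, (c p).map Prod.fst = q p.1)
    (hc2 : ∀ p : α × α, (c p).map Prod.snd = q p.2)
    {O : Set α} (hO : MeasurableSet O) {μ ν : Measure α} [IsProbabilityMeasure μ]
    {η : Measure (α × α)} (hη : η ∈ couplings μ ν) (n : ℕ) :
    1 - stayLaw c (O ×ˢ O) η n univ ≤ (1 - stayLaw q O μ n univ) + (1 - stayLaw q O ν n univ) := by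
  have h₁ : stayLaw c (Prod.fst ⁻¹' O) η n univ = stayLaw q O μ n univ := by
    rw [← Measure.map_apply_univ measurable_fst, map_stayLaw_preimage measurable_fst hc1 hO, hη.1]
  have h₂ : stayLaw c (Prod.snd ⁻¹' O) η n univ = stayLaw q O ν n univ := by
    rw [← Measure.map_apply_univ measurable_snd, map_stayLaw_preimage measurable_snd hc2 hO, hη.2]
  have hZ : chainLaw c η n univ = 1 := by
    rw [← Measure.map_apply_univ measurable_fst, map_chainLaw measurable_fst hc1, hη.1,
      measure_univ]
  have hunion := Measure.le_iff'.1
    (stayLaw_add_le c (measurable_fst hO) (measurable_snd hO) η n) univ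
  rw [Measure.add_apply, Measure.add_apply, h₁, h₂, hZ] at hunion
  calc 1 - stayLaw c (O ×ˢ O) η n univ = (1 + 1) - (stayLaw c (O ×ˢ O) η n univ + 1) :=
        (ENNReal.add_sub_add_eq_sub_right ENNReal.one_ne_top).symm
    _ ≤ (1 + 1) - (stayLaw q O μ n univ + stayLaw q O ν n univ) := tsub_le_tsub_left hunion _
    _ ≤ _ := add_tsub_add_le_tsub_add_tsub

end Chains

section Contraction

variable {S : Type*} [MeasurableSpace S] [MetricSpace S]

lemma wassersteinDist_chainLaw_le_of_mem_couplings {q : Kernel S S} [IsMarkovKernel q]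
    {c : Kernel (S × S) (S × S)}
    (hc1 : ∀ p : S × S, (c p).map Prod.fst = q p.1)
    (hc2 : ∀ p : S × S, (c p).map Prod.snd = q p.2)
    {𝒪 : Set S} (h𝒪 : MeasurableSet 𝒪) {γ Δ : ℝ} (hΔ : ∀ x y : S, dist x y ≤ Δ)
    (hcontr : ∀ x ∈ 𝒪, ∀ xt ∈ 𝒪,
      ∫⁻ p, ENNReal.ofReal (dist p.1 p.2) ∂(c (x, xt)) ≤ ENNReal.ofReal (γ * dist x xt))
    {μ ν : Measure S} [IsProbabilityMeasure μ] [IsProbabilityMeasure ν]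
    {η : Measure (S × S)} (hη : η ∈ couplings μ ν) (n : ℕ) :
    wassersteinDist dist (chainLaw q μ n) (chainLaw q ν n) ≤
      ENNReal.ofReal γ ^ n * ∫⁻ p, ENNReal.ofReal (dist p.1 p.2) ∂η +
      ENNReal.ofReal Δ * ((1 - stayLaw q 𝒪 μ n univ) + (1 - stayLaw q 𝒪 ν n univ)) := by
  set ζ := stayLaw c (𝒪 ×ˢ 𝒪) η n
  have hZ₁ : (chainLaw c η n).map Prod.fst = chainLaw q μ n := by
    rw [map_chainLaw measurable_fst hc1, hη.1]
  have hZ₂ : (chainLaw c η n).map Prod.snd = chainLaw q ν n := by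
    rw [map_chainLaw measurable_snd hc2, hη.2]
  have hζ₁ : ζ.map Prod.fst ≤ chainLaw q μ n :=
    hZ₁ ▸ Measure.map_mono (stayLaw_le_chainLaw c _ η n) measurable_fst
  have hζ₂ : ζ.map Prod.snd ≤ chainLaw q ν n :=
    hZ₂ ▸ Measure.map_mono (stayLaw_le_chainLaw c _ η n) measurable_snd
  have hcost : ∫⁻ p, ENNReal.ofReal (dist p.1 p.2) ∂ζ ≤
      ENNReal.ofReal γ ^ n * ∫⁻ p, ENNReal.ofReal (dist p.1 p.2) ∂η :=
    lintegral_stayLaw_le (h𝒪.prod h𝒪) ENNReal.ofReal_ne_top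
      (fun p hp => (hcontr _ hp.1 _ hp.2).trans_eq (ENNReal.ofReal_mul' dist_nonneg)) η n
  calc wassersteinDist dist (chainLaw q μ n) (chainLaw q ν n)
      ≤ ∫⁻ p, ENNReal.ofReal (dist p.1 p.2) ∂ζ + ENNReal.ofReal Δ * (1 - ζ univ) := by
        simpa only [measure_univ] using
          wassersteinDist_le_lintegral_add hΔ (by simp only [measure_univ]) hζ₁ hζ₂
    _ ≤ _ := by gcongr; exact one_sub_stayLaw_prod_le hc1 hc2 h𝒪 hη n

end Contraction

theorem wasserstein_contraction_of_coupling_general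
    {S : Type*} [MeasurableSpace S] [MetricSpace S] [BorelSpace S]
    (q : Kernel S S) [IsMarkovKernel q]
    (c : Kernel (S × S) (S × S))
    (hc1 : ∀ p : S × S, (c p).map Prod.fst = q p.1)
    (hc2 : ∀ p : S × S, (c p).map Prod.snd = q p.2)
    (𝒪 : Set S) (h𝒪 : IsOpen 𝒪)
    (γ : ℝ)
    (Δ : ℝ) (hΔ : ∀ x y : S, dist x y ≤ Δ)
    (hcontr : ∀ x ∈ 𝒪, ∀ xt ∈ 𝒪,
      ∫⁻ p, ENNReal.ofReal (dist p.1 p.2) ∂(c (x, xt)) ≤ ENNReal.ofReal (γ * dist x xt))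
    (μ ν : Measure S) [IsProbabilityMeasure μ] [IsProbabilityMeasure ν] (n : ℕ) :
    wassersteinDist dist (chainLaw q μ n) (chainLaw q ν n) ≤
      ENNReal.ofReal γ ^ n * wassersteinDist dist μ ν +
      ENNReal.ofReal Δ * ((1 - stayLaw q 𝒪 μ n Set.univ) + (1 - stayLaw q 𝒪 ν n Set.univ)) :=
  le_mul_wassersteinDist_add ⟨_, smul_prod_mem_couplings (by simp only [measure_univ])⟩
    (pow_ne_top ENNReal.ofReal_ne_top) fun _ hη =>
      wassersteinDist_chainLaw_le_of_mem_couplings hc1 hc2 h𝒪.measurableSet hΔ hcontr hη n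

/-- If a Markovian coupling `c` of a Markov kernel `q` on a metric space with metric
bounded by `Δ` contracts distances by a factor `γ ∈ (0,1)` on an open set `𝒪`, then
`𝒲(μqⁿ, νqⁿ) ≤ γⁿ 𝒲(μ,ν) + Δ (P_μ[∃ k<n, X_k ∉ 𝒪] + P_ν[∃ k<n, X_k ∉ 𝒪])`. -/
theorem wasserstein_contraction_of_coupling
    {S : Type*} [MeasurableSpace S] [MetricSpace S] [BorelSpace S]
    (q : Kernel S S) [IsMarkovKernel q]
    (c : Kernel (S × S) (S × S)) [IsMarkovKernel c]
    (hc1 : ∀ p : S × S, (c p).map Prod.fst = q p.1)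
    (hc2 : ∀ p : S × S, (c p).map Prod.snd = q p.2)
    (𝒪 : Set S) (h𝒪 : IsOpen 𝒪)
    (γ : ℝ) (hγ : γ ∈ Set.Ioo (0:ℝ) 1)
    (Δ : ℝ) (hΔ : ∀ x y : S, dist x y ≤ Δ)
    (hcontr : ∀ x ∈ 𝒪, ∀ xt ∈ 𝒪,
      ∫⁻ p, ENNReal.ofReal (dist p.1 p.2) ∂(c (x, xt)) ≤ ENNReal.ofReal (γ * dist x xt))
    (μ ν : Measure S) [IsProbabilityMeasure μ] [IsProbabilityMeasure ν] (n : ℕ) :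
    wassersteinDist dist (chainLaw q μ n) (chainLaw q ν n) ≤
      ENNReal.ofReal γ ^ n * wassersteinDist dist μ ν +
      ENNReal.ofReal Δ * ((1 - stayLaw q 𝒪 μ n Set.univ) + (1 - stayLaw q 𝒪 ν n Set.univ)) :=
  wasserstein_contraction_of_coupling_general q c hc1 hc2 𝒪 h𝒪 γ Δ hΔ hcontr μ ν n
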